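/- Let (Ω, 𝔉, P) be a probability space, and let X, F : Ω → H be strongly measurable random variables with E‖X‖² < ∞ and E‖F‖² < ∞. If a ≥ 0 satisfies E‖X − F‖² ≤ a, then the Hilbert–Schmidt distance between the random rank-one operators X ⊗ X and F ⊗ F satisfies E[‖X ⊗ X − F ⊗ F‖_HS] ≤ (2 · √(E‖X‖²) + √a) · √a. -/

import Mathlib

open MeasureTheory
open scoped RealInnerProductSpace

/-!
Read `x ⊗ y` in the coordinates of `b` as the sequence `(⟪x, b i⟫ • y)ᵢ ∈ ℓ²(ι, H)`; by Parseval
its norm is `‖x‖ * ‖y‖`. Writing `d = x - f`, we have `x ⊗ x - f ⊗ f = x ⊗ d + d ⊗ f`, so the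
triangle inequality and `‖f‖ ≤ ‖x‖ + ‖d‖` bound the Hilbert–Schmidt distance pointwise by
`2 ‖x‖ ‖d‖ + ‖d‖²`. Taking expectations, Cauchy–Schwarz bounds `E[‖X‖ ‖X - F‖]` by `√(E‖X‖²) √a`.
-/

lemma lp.norm_two_eq_sqrt_tsum {ι : Type*} {E : ι → Type*} [∀ i, NormedAddCommGroup (E i)]
    (g : lp E 2) : ‖g‖ = √(∑' i, ‖g i‖ ^ 2) := by
  rw [lp.norm_eq_tsum_rpow (by norm_num), Real.sqrt_eq_rpow]
  norm_num

namespace HilbertBasis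

variable {ι H : Type*} [NormedAddCommGroup H] [InnerProductSpace ℝ H] (b : HilbertBasis ι ℝ H)

lemma hasSum_norm_inner_smul_sq (x y : H) :
    HasSum (fun i => ‖⟪x, b i⟫ • y‖ ^ 2) (‖x‖ ^ 2 * ‖y‖ ^ 2) := by
  have parseval := (b.hasSum_inner_mul_inner x x).mul_right (‖y‖ ^ 2)
  rw [real_inner_self_eq_norm_sq] at parseval
  refine parseval.congr_fun fun i => ?_
  rw [norm_smul, mul_pow, Real.norm_eq_abs, sq_abs, sq, real_inner_comm (b i) x]

/-- The operator `x ⊗ y = ⟪x, ·⟫ • y` encoded by its values on `b`, so that its `ℓ²` norm is its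
Hilbert–Schmidt norm. -/
noncomputable def rankOne (x y : H) : lp (fun _ : ι => H) 2 :=
  ⟨fun i => ⟪x, b i⟫ • y, memℓp_gen (by simpa using (b.hasSum_norm_inner_smul_sq x y).summable)⟩

@[simp]
lemma rankOne_apply (x y : H) (i : ι) : b.rankOne x y i = ⟪x, b i⟫ • y := rfl

lemma norm_rankOne (x y : H) : ‖b.rankOne x y‖ = ‖x‖ * ‖y‖ := by
  simp only [lp.norm_two_eq_sqrt_tsum, rankOne_apply, (b.hasSum_norm_inner_smul_sq x y).tsum_eq]
  rw [← mul_pow, Real.sqrt_sq (by positivity)]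

lemma norm_rankOne_sub_rankOne (x y f g : H) :
    ‖b.rankOne x y - b.rankOne f g‖ = √(∑' i, ‖⟪x, b i⟫ • y - ⟪f, b i⟫ • g‖ ^ 2) := by
  simp only [lp.norm_two_eq_sqrt_tsum, lp.coeFn_sub, Pi.sub_apply, rankOne_apply]

lemma rankOne_self_sub_rankOne_self (x f : H) :
    b.rankOne x x - b.rankOne f f = b.rankOne x (x - f) + b.rankOne (x - f) f := by
  ext i
  simp only [lp.coeFn_sub, lp.coeFn_add, Pi.sub_apply, Pi.add_apply, rankOne_apply,
    inner_sub_left, smul_sub, sub_smul]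
  abel

lemma norm_rankOne_self_sub_rankOne_self_le (x f : H) :
    ‖b.rankOne x x - b.rankOne f f‖ ≤ 2 * (‖x‖ * ‖x - f‖) + ‖x - f‖ ^ 2 := by
  have hf : ‖f‖ ≤ ‖x‖ + ‖x - f‖ := by simpa using norm_sub_le x (x - f)
  calc ‖b.rankOne x x - b.rankOne f f‖
      ≤ ‖b.rankOne x (x - f)‖ + ‖b.rankOne (x - f) f‖ := by
        rw [rankOne_self_sub_rankOne_self]; exact norm_add_le _ _
    _ = ‖x‖ * ‖x - f‖ + ‖x - f‖ * ‖f‖ := by rw [norm_rankOne, norm_rankOne]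
    _ ≤ ‖x‖ * ‖x - f‖ + ‖x - f‖ * (‖x‖ + ‖x - f‖) := by gcongr
    _ = 2 * (‖x‖ * ‖x - f‖) + ‖x - f‖ ^ 2 := by ring

end HilbertBasis

lemma integral_norm_mul_norm_le_sqrt_mul_sqrt {α E : Type*} [MeasurableSpace α] {μ : Measure α}
    [NormedAddCommGroup E] {f g : α → E}
    (hf : MemLp f 2 μ) (hg : MemLp g 2 μ) :
    ∫ a, ‖f a‖ * ‖g a‖ ∂μ ≤ √(∫ a, ‖f a‖ ^ 2 ∂μ) * √(∫ a, ‖g a‖ ^ 2 ∂μ) := by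
  have holder := integral_mul_norm_le_Lp_mul_Lq Real.HolderConjugate.two_two
    (by simpa using hf) (by simpa using hg)
  simpa [Real.sqrt_eq_rpow] using holder

theorem expected_HS_distance_rankOne_sq_le_general {H : Type*} [NormedAddCommGroup H]
    [InnerProductSpace ℝ H]
    {ι : Type*} (b : HilbertBasis ι ℝ H)
    {Ω : Type*} [MeasurableSpace Ω] (P : Measure Ω)
    (X F : Ω → H) (hXm : AEStronglyMeasurable X P) (hFm : AEStronglyMeasurable F P)
    (hX2 : Integrable (fun ω => ‖X ω‖ ^ 2) P)
    (hF2 : Integrable (fun ω => ‖F ω‖ ^ 2) P)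
    (a : ℝ) (ha : 0 ≤ a)
    (hXF : (∫ ω, ‖X ω - F ω‖ ^ 2 ∂P) ≤ a) :
    (∫ ω, Real.sqrt (∑' i, ‖⟪X ω, b i⟫ • X ω - ⟪F ω, b i⟫ • F ω‖ ^ 2) ∂P)
      ≤ (2 * Real.sqrt (∫ ω, ‖X ω‖ ^ 2 ∂P) + Real.sqrt a) * Real.sqrt a := by
  have hX : MemLp X 2 P := (memLp_two_iff_integrable_sq_norm hXm).2 hX2
  have hD : MemLp (X - F) 2 P := hX.sub ((memLp_two_iff_integrable_sq_norm hFm).2 hF2)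
  have hD2 : Integrable (fun ω => ‖X ω - F ω‖ ^ 2) P :=
    (memLp_two_iff_integrable_sq_norm hD.1).1 hD
  have hXD : Integrable (fun ω => ‖X ω‖ * ‖X ω - F ω‖) P := hX.norm.integrable_mul hD.norm
  calc ∫ ω, √(∑' i, ‖⟪X ω, b i⟫ • X ω - ⟪F ω, b i⟫ • F ω‖ ^ 2) ∂P
      ≤ ∫ ω, 2 * (‖X ω‖ * ‖X ω - F ω‖) + ‖X ω - F ω‖ ^ 2 ∂P := by
        refine integral_mono_of_nonneg (.of_forall fun ω => by positivity)
          ((hXD.const_mul 2).add hD2) (.of_forall fun ω => ?_)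
        simpa only [b.norm_rankOne_sub_rankOne] using
          b.norm_rankOne_self_sub_rankOne_self_le (X ω) (F ω)
    _ = 2 * ∫ ω, ‖X ω‖ * ‖X ω - F ω‖ ∂P + ∫ ω, ‖X ω - F ω‖ ^ 2 ∂P := by
        rw [integral_add (hXD.const_mul 2) hD2, integral_const_mul]
    _ ≤ 2 * (√(∫ ω, ‖X ω‖ ^ 2 ∂P) * √a) + √a * √a := by
        rw [Real.mul_self_sqrt ha]
        gcongr
        exact (integral_norm_mul_norm_le_sqrt_mul_sqrt hX hD).trans (by gcongr; exact hXF)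
    _ = (2 * √(∫ ω, ‖X ω‖ ^ 2 ∂P) + √a) * √a := by ring

/-- Quantitative core of Lemma 4.2: if `X, F` are square-integrable `H`-valued random
variables with `E‖X − F‖² ≤ a`, then the expected Hilbert–Schmidt distance between the
random rank-one operators `X ⊗ X` and `F ⊗ F` (computed via a fixed Hilbert basis `b`)
is at most `(2 √(E‖X‖²) + √a) √a`. -/
theorem expected_HS_distance_rankOne_sq_le {H : Type*} [NormedAddCommGroup H]
    [InnerProductSpace ℝ H] [CompleteSpace H] [SecondCountableTopology H]
    {ι : Type*} (b : HilbertBasis ι ℝ H)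
    {Ω : Type*} [MeasurableSpace Ω] (P : Measure Ω) [IsProbabilityMeasure P]
    (X F : Ω → H) (hXm : AEStronglyMeasurable X P) (hFm : AEStronglyMeasurable F P)
    (hX2 : Integrable (fun ω => ‖X ω‖ ^ 2) P)
    (hF2 : Integrable (fun ω => ‖F ω‖ ^ 2) P)
    (a : ℝ) (ha : 0 ≤ a)
    (hXF : (∫ ω, ‖X ω - F ω‖ ^ 2 ∂P) ≤ a) :
    (∫ ω, Real.sqrt (∑' i, ‖⟪X ω, b i⟫ • X ω - ⟪F ω, b i⟫ • F ω‖ ^ 2) ∂P)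
      ≤ (2 * Real.sqrt (∫ ω, ‖X ω‖ ^ 2 ∂P) + Real.sqrt a) * Real.sqrt a :=
  expected_HS_distance_rankOne_sq_le_general b P X F hXm hFm hX2 hF2 a ha hXF
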